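/- arXiv:2108.04849 — 4 statements merged into one kernel-verified Lean document; each statement's English description precedes it below -/
import Mathlib

section
/- The number of ranked labeled tree shapes compatible with a labeled binary perfect phylogeny (pi1, pi2), where pi1 has n1 leaves' worth of samples and pi2 has n2, equals binomial(n1+n2−2, n1−1) times the product of the numbers of ranked labeled tree shapes compatible with pi1 and with pi2. -/
/-- A labeled perfect phylogeny: a rooted binary tree whose leaves carry sets of
sample labels. -/
inductive LPP : Type
  | leaf : Finset ℕ → LPP
  | node : LPP → LPP → LPP

namespace LPP

/-- The set of sample labels of a labeled perfect phylogeny. -/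
def samples : LPP → Finset ℕ
  | leaf s => s
  | node l r => l.samples ∪ r.samples

/-- Validity: leaves carry nonempty label sets, and subtrees carry disjoint label sets. -/
def Valid : LPP → Prop
  | leaf s => s.Nonempty
  | node l r => l.Valid ∧ r.Valid ∧ Disjoint l.samples r.samples

/-- One elementary coarsening step: collapsing a cherry (merging the label sets of two
pendant leaf edges), anywhere in the tree; children are unordered. -/
inductive Step : LPP → LPP → Prop
  | cherry (a b : Finset ℕ) : Step (node (leaf a) (leaf b)) (leaf (a ∪ b))
  | swap (s t : LPP) : Step (node s t) (node t s)
  | left {t t' : LPP} (s : LPP) : Step t t' → Step (node t s) (node t' s)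
  | right {t t' : LPP} (s : LPP) : Step t t' → Step (node s t) (node s t')

/-- `π.Refines σ` iff `σ` is obtained from `π` by sequentially collapsing cherries. -/
def Refines (π σ : LPP) : Prop := Relation.ReflTransGen Step π σ

end LPP

/-- A ranked labeled tree: rooted binary tree with leaves labeled by samples and ranks
on internal nodes (ordered children; ranked labeled tree shapes are the quotient by
`RLTree.Equiv`). -/
inductive RLTree : Type
  | leaf : ℕ → RLTree
  | node : ℕ → RLTree → RLTree → RLTree

namespace RLTree

/-- Multiset of leaf labels. -/
def leafLabels : RLTree → Multiset ℕ
  | leaf x => {x}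
  | node _ l r => l.leafLabels + r.leafLabels

/-- Multiset of internal node ranks. -/
def ranks : RLTree → Multiset ℕ
  | leaf _ => 0
  | node k l r => k ::ₘ (l.ranks + r.ranks)

/-- Ranks strictly increase away from the root, starting above the bound `b`. -/
def IncreasingFrom : ℕ → RLTree → Prop
  | _, leaf _ => True
  | b, node k l r => b < k ∧ IncreasingFrom k l ∧ IncreasingFrom k r

/-- The labeled perfect phylogeny obtained by forgetting ranks and viewing each leaf as
a singleton block. -/
def toLPP : RLTree → LPP
  | leaf x => LPP.leaf {x}
  | node _ l r => LPP.node l.toLPP r.toLPP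

/-- `t.Valid s`: `t` is a ranked labeled tree whose leaves are labeled bijectively by
the sample set `s` and whose internal nodes carry the ranks `1, …, |s|-1`, each exactly
once, increasing from the root toward the leaves. -/
def Valid (t : RLTree) (s : Finset ℕ) : Prop :=
  t.leafLabels = s.val ∧ t.ranks = (Finset.Icc 1 (s.card - 1)).val ∧
    IncreasingFrom 0 t

/-- Equality of ranked labeled trees up to reordering of children. -/
inductive Equiv : RLTree → RLTree → Prop
  | leaf (x : ℕ) : Equiv (leaf x) (leaf x)
  | node {k : ℕ} {a b c d : RLTree} :
      Equiv a c → Equiv b d → Equiv (node k a b) (node k c d)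
  | swap {k : ℕ} {a b c d : RLTree} :
      Equiv a d → Equiv b c → Equiv (node k a b) (node k c d)

end RLTree

/-- `GLcount π` is the number of ranked labeled tree shapes compatible with the labeled
perfect phylogeny `π`. -/
noncomputable def GLcount (π : LPP) : ℕ :=
  Nat.card {q : Quot RLTree.Equiv //
    ∃ t : RLTree, Quot.mk _ t = q ∧ t.Valid π.samples ∧ LPP.Refines t.toLPP π}

/-!
A ranked tree compatible with `node π₁ π₂` has its root at rank `1` and, up to swapping the
children, a left subtree carrying the samples of `π₁` and a right one carrying those of `π₂`.
It is determined by the set `c ⊆ {2, …, n₁ + n₂ - 1}` of the `n₁ - 1` ranks used on the left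
together with the two subtrees with their ranks renumbered `1, 2, …` in increasing order, and
every such triple glues back to a compatible tree. Swapping children never identifies two
different triples because the two sample sets differ, so compatible shapes of `node π₁ π₂`
are in bijection with `(n₁-1)`-subsets of an `(n₁+n₂-2)`-set times pairs of compatible shapes.
-/

open Finset

namespace LPP

theorem Step.samples_eq {π σ : LPP} (h : Step π σ) : π.samples = σ.samples := by
  induction h with
  | cherry => rfl
  | swap => exact union_comm _ _
  | left _ _ ih | right _ _ ih => simp [samples, ih]

theorem Refines.samples_eq {π σ : LPP} (h : Refines π σ) : π.samples = σ.samples := by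
  induction h with
  | refl => rfl
  | tail _ hs ih => rw [ih, hs.samples_eq]

theorem Valid.samples_nonempty : ∀ {π : LPP}, π.Valid → π.samples.Nonempty
  | leaf _, h => h
  | node _ _, h => h.1.samples_nonempty.mono subset_union_left

theorem Refines.node {a b a' b' : LPP} (ha : Refines a a') (hb : Refines b b') :
    Refines (LPP.node a b) (LPP.node a' b') :=
  (ha.lift (LPP.node · b) fun _ _ => Step.left b).trans
    (hb.lift (LPP.node a' ·) fun _ _ => Step.right a')

theorem exists_eq_node_of_refines_node {t π₁ π₂ : LPP} (h : Refines t (node π₁ π₂)) :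
    ∃ a b, t = node a b ∧
      (Refines a π₁ ∧ Refines b π₂ ∨ Refines a π₂ ∧ Refines b π₁) := by
  induction h using Relation.ReflTransGen.head_induction_on with
  | refl => exact ⟨π₁, π₂, rfl, .inl ⟨.refl, .refl⟩⟩
  | head hstep _ ih =>
    obtain ⟨a, b, rfl, hab⟩ := ih
    cases hstep with
    | swap => exact ⟨_, _, rfl, hab.symm.imp And.symm And.symm⟩
    | left _ h => exact ⟨_, _, rfl, hab.imp (And.imp_left (.head h)) (And.imp_left (.head h))⟩
    | right _ h =>
      exact ⟨_, _, rfl, hab.imp (And.imp_right (.head h)) (And.imp_right (.head h))⟩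

end LPP

namespace Finset

/-- `s.nthSmallest i` is the `i`-th smallest element of `s` and `s.position x` the place of `x`
in `s`; both count from `1`, like the ranks `1, …, n` of a ranked tree. -/
noncomputable def nthSmallest (s : Finset ℕ) (i : ℕ) : ℕ := Nat.nth (· ∈ s) (i - 1)

def position (s : Finset ℕ) (x : ℕ) : ℕ := Nat.count (· ∈ s) x + 1

theorem val_map_eq_of_bijOn {α β : Type*} [DecidableEq β] {f : α → β} {s : Finset α}
    {t : Finset β} (h : Set.BijOn f s t) : s.val.map f = t.val := by
  have himage : s.image f = t := coe_injective (by rw [coe_image, h.image_eq])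
  rw [← image_val_of_injOn h.injOn, himage]

variable {s : Finset ℕ}

private theorem finite_mem (s : Finset ℕ) : (Set.ofPred (· ∈ s)).Finite := s.finite_toSet

private theorem card_toFinset_finite_mem : #(finite_mem s).toFinset = #s := by
  congr; ext; simp [Set.ofPred]

theorem nthSmallest_mem {i : ℕ} (hi : i ∈ Icc 1 #s) : s.nthSmallest i ∈ s :=
  Nat.nth_mem_of_lt_card (finite_mem s) (by rw [card_toFinset_finite_mem]; grind)

theorem position_mem_Icc {x : ℕ} (hx : x ∈ s) : s.position x ∈ Icc 1 #s := by
  have := Nat.count_lt_card (finite_mem s) hx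
  rw [card_toFinset_finite_mem] at this
  simp only [position, mem_Icc]
  omega

theorem position_nthSmallest {i : ℕ} (hi : i ∈ Icc 1 #s) : s.position (s.nthSmallest i) = i := by
  have := Nat.count_nth_of_lt_card_finite (n := i - 1) (finite_mem s)
    (by rw [card_toFinset_finite_mem]; grind)
  simp only [position, nthSmallest, this]
  grind

theorem nthSmallest_position {x : ℕ} (hx : x ∈ s) : s.nthSmallest (s.position x) = x := by
  simp [nthSmallest, position, Nat.nth_count hx]

theorem strictMonoOn_nthSmallest : StrictMonoOn s.nthSmallest (Icc 1 #s) := by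
  intro i hi j hj hij
  exact Nat.nth_lt_nth_of_lt_card (finite_mem s) (by grind)
    (by rw [card_toFinset_finite_mem]; grind)

theorem strictMonoOn_position : StrictMonoOn s.position s :=
  fun _ hx _ _ hxy => Nat.add_lt_add_right (Nat.count_strict_mono hx hxy) 1

theorem bijOn_nthSmallest : Set.BijOn s.nthSmallest (Icc 1 #s) s :=
  Set.InvOn.bijOn ⟨fun _ hi => position_nthSmallest hi, fun _ hx => nthSmallest_position hx⟩
    (fun _ hi => nthSmallest_mem hi) (fun _ hx => position_mem_Icc hx)

theorem bijOn_position : Set.BijOn s.position s (Icc 1 #s) :=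
  Set.InvOn.bijOn ⟨fun _ hx => nthSmallest_position hx, fun _ hi => position_nthSmallest hi⟩
    (fun _ hx => position_mem_Icc hx) (fun _ hi => nthSmallest_mem hi)

end Finset

namespace RLTree

theorem Equiv.refl : ∀ t : RLTree, Equiv t t
  | .leaf x => .leaf x
  | .node _ l r => .node (Equiv.refl l) (Equiv.refl r)

theorem Equiv.symm {a b : RLTree} (h : Equiv a b) : Equiv b a := by
  induction h with
  | leaf x => exact .leaf x
  | node _ _ ih₁ ih₂ => exact .node ih₁ ih₂
  | swap _ _ ih₁ ih₂ => exact .swap ih₂ ih₁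

theorem Equiv.trans {a b c : RLTree} (hab : Equiv a b) (hbc : Equiv b c) : Equiv a c := by
  induction hab generalizing c with
  | leaf => exact hbc
  | node _ _ ih₁ ih₂ =>
    cases hbc with
    | node h₁ h₂ => exact .node (ih₁ h₁) (ih₂ h₂)
    | swap h₁ h₂ => exact .swap (ih₁ h₁) (ih₂ h₂)
  | swap _ _ ih₁ ih₂ =>
    cases hbc with
    | node h₁ h₂ => exact .swap (ih₁ h₂) (ih₂ h₁)
    | swap h₁ h₂ => exact .node (ih₁ h₂) (ih₂ h₁)

theorem equivalence_equiv : Equivalence Equiv := ⟨Equiv.refl, Equiv.symm, Equiv.trans⟩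

theorem mk_eq_mk_iff {t t' : RLTree} : Quot.mk Equiv t = Quot.mk Equiv t' ↔ Equiv t t' :=
  ⟨fun h => equivalence_equiv.eqvGen_iff.mp (Quot.eqvGen_exact h), Quot.sound⟩

theorem Equiv.leafLabels_eq {t t' : RLTree} (h : Equiv t t') : t.leafLabels = t'.leafLabels := by
  induction h with
  | leaf => rfl
  | node _ _ ih₁ ih₂ => simp [leafLabels, ih₁, ih₂]
  | swap _ _ ih₁ ih₂ => simp [leafLabels, ih₁, ih₂, add_comm]

theorem Equiv.ranks_eq {t t' : RLTree} (h : Equiv t t') : t.ranks = t'.ranks := by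
  induction h with
  | leaf => rfl
  | node _ _ ih₁ ih₂ => simp [ranks, ih₁, ih₂]
  | swap _ _ ih₁ ih₂ => simp [ranks, ih₁, ih₂, add_comm]

theorem Equiv.increasingFrom_iff {t t' : RLTree} (h : Equiv t t') (b : ℕ) :
    IncreasingFrom b t ↔ IncreasingFrom b t' := by
  induction h generalizing b with
  | leaf => rfl
  | node _ _ ih₁ ih₂ => simp only [IncreasingFrom, ih₁, ih₂]
  | swap _ _ ih₁ ih₂ => simp only [IncreasingFrom, ih₁, ih₂, and_comm]

theorem Equiv.valid_iff {t t' : RLTree} (h : Equiv t t') {s : Finset ℕ} :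
    t.Valid s ↔ t'.Valid s := by
  simp only [Valid, h.leafLabels_eq, h.ranks_eq, h.increasingFrom_iff]

theorem card_leafLabels : ∀ t : RLTree, Multiset.card t.leafLabels = Multiset.card t.ranks + 1
  | leaf _ => rfl
  | node _ l r => by
    simp only [leafLabels, ranks, Multiset.card_add, Multiset.card_cons, card_leafLabels l,
      card_leafLabels r]
    omega

theorem samples_toLPP (t : RLTree) : t.toLPP.samples = t.leafLabels.toFinset := by
  induction t with
  | leaf => rfl
  | node _ l r ihl ihr => simp [toLPP, leafLabels, LPP.samples, ihl, ihr]

theorem leafLabels_eq_samples_of_refines {t : RLTree} {π : LPP} (hnd : t.leafLabels.Nodup)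
    (h : LPP.Refines t.toLPP π) : t.leafLabels = π.samples.val := by
  rw [← h.samples_eq, samples_toLPP, Multiset.toFinset_val, hnd.dedup]

theorem IncreasingFrom.lt_of_mem_ranks : ∀ {t : RLTree} {b x : ℕ}, IncreasingFrom b t →
    x ∈ t.ranks → b < x
  | leaf _, _, _, _, hx => absurd hx (Multiset.notMem_zero _)
  | node k l r, _, x, ⟨hk, hl, hr⟩, hx => by
    rcases Multiset.mem_cons.mp hx with rfl | hx
    · exact hk
    rcases Multiset.mem_add.mp hx with hx | hx
    · exact hk.trans (hl.lt_of_mem_ranks hx)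
    · exact hk.trans (hr.lt_of_mem_ranks hx)

def relabel (f : ℕ → ℕ) : RLTree → RLTree
  | leaf x => leaf x
  | node k l r => node (f k) (l.relabel f) (r.relabel f)

@[simp] theorem leafLabels_relabel (f : ℕ → ℕ) (t : RLTree) :
    (t.relabel f).leafLabels = t.leafLabels := by
  induction t with
  | leaf => rfl
  | node _ _ _ ihl ihr => simp [relabel, leafLabels, ihl, ihr]

@[simp] theorem ranks_relabel (f : ℕ → ℕ) (t : RLTree) : (t.relabel f).ranks = t.ranks.map f := by
  induction t with
  | leaf => rfl
  | node _ _ _ ihl ihr => simp [relabel, ranks, ihl, ihr]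

@[simp] theorem toLPP_relabel (f : ℕ → ℕ) (t : RLTree) : (t.relabel f).toLPP = t.toLPP := by
  induction t with
  | leaf => rfl
  | node _ _ _ ihl ihr => simp [relabel, toLPP, ihl, ihr]

theorem Equiv.relabel (f : ℕ → ℕ) {t t' : RLTree} (h : Equiv t t') :
    Equiv (t.relabel f) (t'.relabel f) := by
  induction h with
  | leaf x => exact .leaf x
  | node _ _ ih₁ ih₂ => exact .node ih₁ ih₂
  | swap _ _ ih₁ ih₂ => exact .swap ih₁ ih₂

theorem relabel_relabel_eq_self {f g : ℕ → ℕ} :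
    ∀ {t : RLTree}, (∀ x ∈ t.ranks, g (f x) = x) → (t.relabel f).relabel g = t
  | leaf _, _ => rfl
  | node k l r, h => by
    simp only [ranks, Multiset.mem_cons, Multiset.mem_add] at h
    simp only [relabel, h k (.inl rfl), relabel_relabel_eq_self fun x hx => h x (.inr (.inl hx)),
      relabel_relabel_eq_self fun x hx => h x (.inr (.inr hx))]

theorem IncreasingFrom.relabel {f : ℕ → ℕ} : ∀ {t : RLTree} {b b' : ℕ},
    StrictMonoOn f {x | x ∈ t.ranks} → (∀ x ∈ t.ranks, b' < f x) →
    IncreasingFrom b t → IncreasingFrom b' (t.relabel f)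
  | leaf _, _, _, _, _, _ => trivial
  | node k l r, _, _, hf, hb, ⟨_, hl, hr⟩ => by
    have hk : k ∈ (node k l r).ranks := Multiset.mem_cons_self _ _
    have hsubl : {x | x ∈ l.ranks} ⊆ {x | x ∈ (node k l r).ranks} :=
      fun x hx => Multiset.mem_cons_of_mem (Multiset.mem_add.mpr (.inl hx))
    have hsubr : {x | x ∈ r.ranks} ⊆ {x | x ∈ (node k l r).ranks} :=
      fun x hx => Multiset.mem_cons_of_mem (Multiset.mem_add.mpr (.inr hx))
    exact ⟨hb k hk,
      IncreasingFrom.relabel (hf.mono hsubl)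
        (fun x hx => hf hk (hsubl hx) (hl.lt_of_mem_ranks hx)) hl,
      IncreasingFrom.relabel (hf.mono hsubr)
        (fun x hx => hf hk (hsubr hx) (hr.lt_of_mem_ranks hx)) hr⟩

def Ranked (t : RLTree) (R : Finset ℕ) (b : ℕ) : Prop :=
  t.ranks = R.val ∧ IncreasingFrom b t

theorem Ranked.relabel {t : RLTree} {R R' : Finset ℕ} {b b' : ℕ} {f : ℕ → ℕ}
    (ht : t.Ranked R b) (hmono : StrictMonoOn f R) (hbij : Set.BijOn f R R')
    (hR' : ∀ x ∈ R', b' < x) : (t.relabel f).Ranked R' b' := by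
  obtain ⟨hranks, hinc⟩ := ht
  have hset : {x | x ∈ t.ranks} = R := by ext; simp [hranks]
  refine ⟨by rw [ranks_relabel, hranks, val_map_eq_of_bijOn hbij], hinc.relabel ?_ ?_⟩
  · rwa [hset]
  · exact fun x hx => hR' _ (hbij.mapsTo (hset ▸ hx))

variable {t : RLTree} {c : Finset ℕ} {b : ℕ}

theorem Ranked.relabel_position (h : t.Ranked c b) :
    (t.relabel c.position).Ranked (Icc 1 #c) 0 :=
  h.relabel strictMonoOn_position bijOn_position fun x hx => by simp at hx; omega

theorem Ranked.relabel_nthSmallest {b' : ℕ} (h : t.Ranked (Icc 1 #c) b)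
    (hc : ∀ x ∈ c, b' < x) : (t.relabel c.nthSmallest).Ranked c b' :=
  h.relabel strictMonoOn_nthSmallest bijOn_nthSmallest hc

theorem Ranked.relabel_nthSmallest_relabel_position (h : t.Ranked c b) :
    (t.relabel c.position).relabel c.nthSmallest = t :=
  relabel_relabel_eq_self fun _ hx => nthSmallest_position (by rwa [h.1] at hx)

theorem Ranked.relabel_position_relabel_nthSmallest (h : t.Ranked (Icc 1 #c) b) :
    (t.relabel c.nthSmallest).relabel c.position = t :=
  relabel_relabel_eq_self fun _ hx => position_nthSmallest (by rwa [h.1] at hx)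

theorem Valid.root_eq_one {k : ℕ} {l r : RLTree} {s : Finset ℕ} (h : (node k l r).Valid s) :
    k = 1 := by
  obtain ⟨-, hranks, hk, hl, hr⟩ := h
  have hkIcc : k ∈ Icc 1 (#s - 1) := by
    rw [← mem_val, ← hranks]
    exact Multiset.mem_cons_self _ _
  have h1 : 1 ∈ (node k l r).ranks := by rw [hranks, mem_val, mem_Icc]; grind
  rcases Multiset.mem_cons.mp h1 with h1 | h1
  · exact h1.symm
  rcases Multiset.mem_add.mp h1 with h1 | h1
  · exact absurd (hl.lt_of_mem_ranks h1) (by omega)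
  · exact absurd (hr.lt_of_mem_ranks h1) (by omega)

theorem valid_node_one_iff {l r : RLTree} {s : Finset ℕ} (hs : 2 ≤ #s) :
    (node 1 l r).Valid s ↔ l.leafLabels + r.leafLabels = s.val ∧
      l.ranks + r.ranks = (Icc 2 (#s - 1)).val ∧ IncreasingFrom 1 l ∧ IncreasingFrom 1 r := by
  have hIcc : (Icc 1 (#s - 1)).val = 1 ::ₘ (Icc 2 (#s - 1)).val := by
    rw [← insert_Icc_add_one_left_eq_Icc (by omega), insert_val_of_notMem (by simp)]
    rfl
  simp [Valid, leafLabels, ranks, IncreasingFrom, hIcc]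

noncomputable def glue (c d : Finset ℕ) (t₁ t₂ : RLTree) : RLTree :=
  node 1 (t₁.relabel c.nthSmallest) (t₂.relabel d.nthSmallest)

noncomputable def glueShape (U : Finset ℕ) (x : Finset ℕ × Quot Equiv × Quot Equiv) :
    Quot Equiv :=
  Quot.map₂ (glue x.1 (U \ x.1)) (fun _ _ _ h => .node (.refl _) (h.relabel _))
    (fun _ _ _ h => .node (h.relabel _) (.refl _)) x.2.1 x.2.2

theorem eq_and_equiv_of_equiv_relabel_nthSmallest {t t' : RLTree} {c c' : Finset ℕ}
    {b b' : ℕ} (ht : t.Ranked (Icc 1 #c) b) (ht' : t'.Ranked (Icc 1 #c') b')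
    (h : Equiv (t.relabel c.nthSmallest) (t'.relabel c'.nthSmallest)) :
    c = c' ∧ Equiv t t' := by
  have hc : c = c' := by
    have := h.ranks_eq
    rwa [ranks_relabel, ranks_relabel, ht.1, ht'.1, val_map_eq_of_bijOn bijOn_nthSmallest,
      val_map_eq_of_bijOn bijOn_nthSmallest, val_inj] at this
  subst hc
  refine ⟨rfl, ?_⟩
  simpa only [ht.relabel_position_relabel_nthSmallest, ht'.relabel_position_relabel_nthSmallest]
    using h.relabel c.position

theorem Equiv.glue_inj {c d c' d' : Finset ℕ} {t₁ t₂ t₁' t₂' : RLTree} {b : ℕ}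
    (h₁ : t₁.Ranked (Icc 1 #c) b) (h₂ : t₂.Ranked (Icc 1 #d) b)
    (h₁' : t₁'.Ranked (Icc 1 #c') b) (h₂' : t₂'.Ranked (Icc 1 #d') b)
    (hlab : t₁.leafLabels ≠ t₂'.leafLabels)
    (h : Equiv (glue c d t₁ t₂) (glue c' d' t₁' t₂')) :
    c = c' ∧ Equiv t₁ t₁' ∧ Equiv t₂ t₂' := by
  unfold glue at h
  cases h with
  | node hl hr =>
    obtain ⟨rfl, e₁⟩ := eq_and_equiv_of_equiv_relabel_nthSmallest h₁ h₁' hl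
    exact ⟨rfl, e₁, (eq_and_equiv_of_equiv_relabel_nthSmallest h₂ h₂' hr).2⟩
  | swap e _ => exact absurd (by simpa using e.leafLabels_eq) hlab

def Compatible (t : RLTree) (π : LPP) : Prop :=
  t.Valid π.samples ∧ LPP.Refines t.toLPP π

theorem Ranked.card_eq {s : Finset ℕ} (h : t.Ranked c b) (hlab : t.leafLabels = s.val) :
    #c = #s - 1 := by
  have := card_leafLabels t
  rw [hlab, h.1] at this
  simp only [card_val] at this
  omega

theorem Ranked.compatible_relabel_position {π : LPP} (h : t.Ranked c b)
    (hlab : t.leafLabels = π.samples.val) (href : LPP.Refines t.toLPP π) :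
    (t.relabel c.position).Compatible π :=
  ⟨⟨by simp [hlab], h.card_eq hlab ▸ h.relabel_position⟩, by simpa using href⟩

theorem exists_equiv_node_of_compatible {t : RLTree} {π₁ π₂ : LPP}
    (ht : t.Compatible (LPP.node π₁ π₂)) :
    ∃ l r, Equiv t (node 1 l r) ∧ (node 1 l r).Valid (LPP.node π₁ π₂).samples ∧
      LPP.Refines l.toLPP π₁ ∧ LPP.Refines r.toLPP π₂ := by
  obtain ⟨hval, href⟩ := ht
  obtain ⟨a, b, hab, hor⟩ := LPP.exists_eq_node_of_refines_node href
  cases t with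
  | leaf => cases hab
  | node k l r =>
    obtain ⟨rfl, rfl⟩ := LPP.node.inj hab
    obtain rfl := hval.root_eq_one
    rcases hor with ⟨hl, hr⟩ | ⟨hl, hr⟩
    · exact ⟨l, r, .refl _, hval, hl, hr⟩
    · have he : Equiv (node 1 l r) (node 1 r l) := .swap (.refl _) (.refl _)
      exact ⟨r, l, he, he.valid_iff.mp hval, hr, hl⟩

end RLTree

/-- The rank sets available to the left subtree below a root of rank `1`: choosing one is
choosing how the internal ranks of the two subtrees interleave. -/
def rankSplits (n₁ n₂ : ℕ) : Finset (Finset ℕ) :=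
  (Icc 2 (n₁ + n₂ - 1)).powersetCard (n₁ - 1)

theorem card_rankSplits (n₁ n₂ : ℕ) :
    #(rankSplits n₁ n₂) = (n₁ + n₂ - 2).choose (n₁ - 1) := by
  rw [rankSplits, card_powersetCard, Nat.card_Icc]
  congr 1

namespace LPP

def compatibleShapes (π : LPP) : Set (Quot RLTree.Equiv) :=
  {q | ∃ t, Quot.mk _ t = q ∧ t.Compatible π}

theorem GLcount_eq_ncard (π : LPP) : GLcount π = π.compatibleShapes.ncard := rfl

section Node

open RLTree

variable {π₁ π₂ : LPP}

theorem card_samples_node (hv : (node π₁ π₂).Valid) :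
    #(node π₁ π₂).samples = #π₁.samples + #π₂.samples :=
  card_union_of_disjoint hv.2.2

theorem Valid.samples_ne (hv : (node π₁ π₂).Valid) : π₁.samples ≠ π₂.samples := fun h =>
  hv.1.samples_nonempty.ne_empty (disjoint_self.mp (h ▸ hv.2.2))

theorem ranked_of_mem_rankSplits (hv : (node π₁ π₂).Valid) {c : Finset ℕ} {t₁ t₂ : RLTree}
    (hc : c ∈ rankSplits #π₁.samples #π₂.samples) (h₁ : t₁.Compatible π₁)
    (h₂ : t₂.Compatible π₂) :
    t₁.Ranked (Icc 1 #c) 0 ∧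
      t₂.Ranked (Icc 1 #(Icc 2 (#π₁.samples + #π₂.samples - 1) \ c)) 0 := by
  obtain ⟨hcU, hcard⟩ := mem_powersetCard.mp hc
  have := hv.1.samples_nonempty.card_pos
  have hdcard : #(Icc 2 (#π₁.samples + #π₂.samples - 1) \ c) = #π₂.samples - 1 := by
    rw [card_sdiff_of_subset hcU, Nat.card_Icc, hcard]
    omega
  rw [hcard, hdcard]
  exact ⟨h₁.1.2, h₂.1.2⟩

theorem compatible_glue (hv : (node π₁ π₂).Valid) {c : Finset ℕ} {t₁ t₂ : RLTree}
    (hc : c ∈ rankSplits #π₁.samples #π₂.samples) (h₁ : t₁.Compatible π₁)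
    (h₂ : t₂.Compatible π₂) :
    (glue c (Icc 2 (#π₁.samples + #π₂.samples - 1) \ c) t₁ t₂).Compatible (node π₁ π₂) := by
  set U := Icc 2 (#π₁.samples + #π₂.samples - 1)
  have hcU := (mem_powersetCard.mp hc).1
  obtain ⟨hr₁, hr₂⟩ := ranked_of_mem_rankSplits hv hc h₁ h₂
  have hl : (t₁.relabel c.nthSmallest).Ranked c 1 :=
    hr₁.relabel_nthSmallest fun x hx => by have := hcU hx; simp at this; omega
  have hr : (t₂.relabel (U \ c).nthSmallest).Ranked (U \ c) 1 :=
    hr₂.relabel_nthSmallest fun x hx => by have := sdiff_subset hx; simp at this; omega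
  have := hv.1.samples_nonempty.card_pos
  have := hv.2.1.samples_nonempty.card_pos
  refine ⟨(valid_node_one_iff (by rw [card_samples_node hv]; omega)).mpr ⟨?_, ?_, hl.2, hr.2⟩,
    by simpa [glue, toLPP] using h₁.2.node h₂.2⟩
  · rw [leafLabels_relabel, leafLabels_relabel, h₁.1.1, h₂.1.1]
    exact congrArg val (disjUnion_eq_union _ _ hv.2.2)
  · rw [hl.1, hr.1, card_samples_node hv, ← union_sdiff_of_subset hcU,
      ← disjUnion_eq_union _ _ disjoint_sdiff]
    rfl

theorem exists_glue_equiv_of_compatible (hv : (node π₁ π₂).Valid) {t : RLTree}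
    (ht : t.Compatible (node π₁ π₂)) :
    ∃ c ∈ rankSplits #π₁.samples #π₂.samples, ∃ t₁ t₂, t₁.Compatible π₁ ∧ t₂.Compatible π₂ ∧
      Equiv (glue c (Icc 2 (#π₁.samples + #π₂.samples - 1) \ c) t₁ t₂) t := by
  obtain ⟨l, r, he, hval, hl, hr⟩ := exists_equiv_node_of_compatible ht
  have := hv.1.samples_nonempty.card_pos
  have := hv.2.1.samples_nonempty.card_pos
  rw [valid_node_one_iff (by rw [card_samples_node hv]; omega), card_samples_node hv] at hval
  obtain ⟨hlab, hranks, hincl, hincr⟩ := hval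
  obtain ⟨hndl, hndr, -⟩ := Multiset.nodup_add.mp (hlab ▸ (node π₁ π₂).samples.nodup)
  obtain ⟨hndl', hndr', hdisj⟩ := Multiset.nodup_add.mp (hranks ▸ nodup _)
  set U := Icc 2 (#π₁.samples + #π₂.samples - 1)
  let c : Finset ℕ := ⟨l.ranks, hndl'⟩
  let d : Finset ℕ := ⟨r.ranks, hndr'⟩
  have hcd : c.disjUnion d (disjoint_val.mp hdisj) = U := val_inj.mp hranks
  have hlab₁ := leafLabels_eq_samples_of_refines hndl hl
  have hd : U \ c = d := by
    rw [← hcd, disjUnion_eq_union, union_sdiff_cancel_left (disjoint_val.mp hdisj)]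
  have hlc : l.Ranked c 1 := ⟨rfl, hincl⟩
  have hrd : r.Ranked d 1 := ⟨rfl, hincr⟩
  have h₁ := hlc.compatible_relabel_position hlab₁ hl
  have h₂ := hrd.compatible_relabel_position (leafLabels_eq_samples_of_refines hndr hr) hr
  refine ⟨c, mem_powersetCard.mpr ⟨?_, ?_⟩, _, _, h₁, h₂, ?_⟩
  · change c ⊆ U
    rw [← hcd, disjUnion_eq_union]
    exact subset_union_left
  · exact hlc.card_eq hlab₁
  · rw [hd, glue, hlc.relabel_nthSmallest_relabel_position,
      hrd.relabel_nthSmallest_relabel_position]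
    exact he.symm

theorem bijOn_glueShape (hv : (node π₁ π₂).Valid) :
    Set.BijOn (glueShape (Icc 2 (#π₁.samples + #π₂.samples - 1)))
      (↑(rankSplits #π₁.samples #π₂.samples) ×ˢ π₁.compatibleShapes ×ˢ π₂.compatibleShapes)
      (node π₁ π₂).compatibleShapes := by
  refine ⟨?_, ?_, ?_⟩
  · rintro ⟨c, _, _⟩ ⟨hc, ⟨t₁, rfl, h₁⟩, ⟨t₂, rfl, h₂⟩⟩
    exact ⟨_, rfl, compatible_glue hv hc h₁ h₂⟩
  · rintro ⟨c, _, _⟩ ⟨hc, ⟨t₁, rfl, h₁⟩, ⟨t₂, rfl, h₂⟩⟩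
      ⟨c', _, _⟩ ⟨hc', ⟨t₁', rfl, h₁'⟩, ⟨t₂', rfl, h₂'⟩⟩ h
    obtain ⟨hr₁, hr₂⟩ := ranked_of_mem_rankSplits hv hc h₁ h₂
    obtain ⟨hr₁', hr₂'⟩ := ranked_of_mem_rankSplits hv hc' h₁' h₂'
    have hlab : t₁.leafLabels ≠ t₂'.leafLabels := by
      rw [h₁.1.1, h₂'.1.1, Ne, val_inj]
      exact hv.samples_ne
    obtain ⟨rfl, e₁, e₂⟩ := (mk_eq_mk_iff.mp h).glue_inj hr₁ hr₂ hr₁' hr₂' hlab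
    exact Prod.ext rfl (Prod.ext (Quot.sound e₁) (Quot.sound e₂))
  · rintro _ ⟨t, rfl, ht⟩
    obtain ⟨c, hc, t₁, t₂, h₁, h₂, he⟩ := exists_glue_equiv_of_compatible hv ht
    exact ⟨(c, Quot.mk _ t₁, Quot.mk _ t₂), ⟨hc, ⟨t₁, rfl, h₁⟩, ⟨t₂, rfl, h₂⟩⟩, Quot.sound he⟩

end Node

end LPP

/-- Proposition 6: the number of ranked labeled tree shapes compatible with a labeled
binary perfect phylogeny `(π₁, π₂)`, where `π₁` carries `n₁` samples and `π₂` carries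
`n₂`, equals `C(n₁+n₂-2, n₁-1)` times the product of the counts for `π₁` and `π₂`. -/
theorem rankedLabeled_compatible_node (π₁ π₂ : LPP)
    (hv : LPP.Valid (LPP.node π₁ π₂)) :
    GLcount (LPP.node π₁ π₂) =
      (π₁.samples.card + π₂.samples.card - 2).choose (π₁.samples.card - 1) *
        GLcount π₁ * GLcount π₂ := by
  simp only [LPP.GLcount_eq_ncard]
  rw [← (LPP.bijOn_glueShape hv).ncard_eq, Set.ncard_prod, Set.ncard_prod, Set.ncard_coe_finset,
    card_rankSplits, mul_assoc]
end

section
/- Fix n ≥ 2, and for 1 ≤ x ≤ floor(n/2) let b'_x(n) = binomial(n−2, x−1)·L_x·L_{n−x} with L_m = m!(m−1)!/2^{m−1}. Then b'_x(n) is monotonically decreasing in x on 1 ≤ x ≤ floor(n/2); in particular b'_1(n) is the largest value. -/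
/-! Since `L_m · 2^(m-1) = m! (m-1)!`, clearing the powers of two and applying
`C(a+b, a) a! b! = (a+b)!` twice gives `b'_x(n) · C(n, x) · 2^(n-2) = (n-2)! n!`, a quantity
independent of `x`. Hence `b'_x(n)` decreases wherever `C(n, x)` increases, namely for
`x ≤ n / 2`. -/

open Nat

theorem Nat.choose_le_choose_of_le_half_left {n a b : ℕ} (hab : a ≤ b) (hb : b ≤ n / 2) :
    n.choose a ≤ n.choose b := by
  induction b, hab using Nat.le_induction with
  | base => rfl
  | succ k _ ih => exact (ih (by omega)).trans (choose_le_succ_of_lt_half_left (by omega))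

section CherryCount

variable (L : ℕ → ℕ) (hL : ∀ m : ℕ, 1 ≤ m → L m * 2 ^ (m - 1) = m ! * (m - 1)!)

/-- `b'_x(n)`, the number of ranked labeled tree shapes compatible with the cherry
perfect phylogeny `(x, n - x)`, given `L m` ranked labeled shapes on `m` leaves. -/
def cherryCount (n x : ℕ) : ℕ := (n - 2).choose (x - 1) * L x * L (n - x)

include hL in
theorem cherryCount_mul_choose_mul_two_pow {n x : ℕ} (hx : 1 ≤ x) (hxn : x < n) :
    cherryCount L n x * (n.choose x * 2 ^ (n - 2)) = (n - 2)! * n ! := by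
  have hsplit : n - 2 = (x - 1) + (n - x - 1) := by omega
  have hchoose : (n - 2).choose (x - 1) * (x - 1)! * (n - x - 1)! = (n - 2)! := by
    rw [hsplit, choose_symm_add, add_choose_mul_factorial_mul_factorial]
  calc cherryCount L n x * (n.choose x * 2 ^ (n - 2))
      = (n - 2).choose (x - 1) * (L x * 2 ^ (x - 1)) * (L (n - x) * 2 ^ (n - x - 1))
          * n.choose x := by
        rw [cherryCount, hsplit, pow_add]; ring
    _ = ((n - 2).choose (x - 1) * (x - 1)! * (n - x - 1)!) * (n.choose x * x ! * (n - x)!) := by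
        rw [hL x hx, hL (n - x) (by omega)]; ring
    _ = (n - 2)! * n ! := by rw [hchoose, Nat.choose_mul_factorial_mul_factorial hxn.le]

include hL in
theorem cherryCount_le_cherryCount_of_le_half {n x y : ℕ} (hx : 1 ≤ x) (hxy : x ≤ y) (hy : y ≤ n / 2) :
    cherryCount L n y ≤ cherryCount L n x := by
  have hyn : y < n := by omega
  have hpos : 0 < n.choose y * 2 ^ (n - 2) := by
    have := Nat.choose_pos hyn.le
    positivity
  refine Nat.le_of_mul_le_mul_right ?_ hpos
  calc cherryCount L n y * (n.choose y * 2 ^ (n - 2))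
      = cherryCount L n x * (n.choose x * 2 ^ (n - 2)) := by
        rw [cherryCount_mul_choose_mul_two_pow L hL (hx.trans hxy) hyn,
          cherryCount_mul_choose_mul_two_pow L hL hx (by omega)]
    _ ≤ cherryCount L n x * (n.choose y * 2 ^ (n - 2)) := by
        gcongr
        exact Nat.choose_le_choose_of_le_half_left hxy hy

end CherryCount

theorem rankedLabeled_cherry_monotone_general (n : ℕ) (L : ℕ → ℕ)
    (hL : ∀ m : ℕ, 1 ≤ m → L m * 2 ^ (m - 1) = Nat.factorial m * Nat.factorial (m - 1)) :
    (∀ x y : ℕ, 1 ≤ x → x ≤ y → y ≤ n / 2 →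
      (n - 2).choose (y - 1) * L y * L (n - y) ≤
        (n - 2).choose (x - 1) * L x * L (n - x)) ∧
    (∀ x : ℕ, 1 ≤ x → x ≤ n / 2 →
      (n - 2).choose (x - 1) * L x * L (n - x) ≤
        (n - 2).choose 0 * L 1 * L (n - 1)) :=
  ⟨fun _ _ hx hxy hy => cherryCount_le_cherryCount_of_le_half L hL hx hxy hy,
    fun _ hx hxn => cherryCount_le_cherryCount_of_le_half L hL le_rfl hx hxn⟩

/-- Proposition 8: fix `n ≥ 2` and let `b'_x(n) = C(n-2, x-1) L_x L_{n-x}` with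
`L_m = m!(m-1)!/2^{m-1}`. Then `b'_x(n)` is monotonically decreasing in `x` on
`1 ≤ x ≤ ⌊n/2⌋`; in particular `b'_1(n)` is the largest value. -/
theorem rankedLabeled_cherry_monotone (n : ℕ) (hn : 2 ≤ n) (L : ℕ → ℕ)
    (hL : ∀ m : ℕ, 1 ≤ m → L m * 2 ^ (m - 1) = Nat.factorial m * Nat.factorial (m - 1)) :
    (∀ x y : ℕ, 1 ≤ x → x ≤ y → y ≤ n / 2 →
      (n - 2).choose (y - 1) * L y * L (n - y) ≤
        (n - 2).choose (x - 1) * L x * L (n - x)) ∧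
    (∀ x : ℕ, 1 ≤ x → x ≤ n / 2 →
      (n - 2).choose (x - 1) * L x * L (n - x) ≤
        (n - 2).choose 0 * L 1 * L (n - 1)) :=
  rankedLabeled_cherry_monotone_general n L hL
end

section
/- Fix n ≥ 2, and for 1 ≤ x ≤ floor(n/2) let b''_x(n) = X_x·X_{n−x} with X_m = (2m−2)!/(2^{m−1}(m−1)!). Then b''_{x+1}(n)/b''_x(n) = (2x−1)/(2n−2x−3) ≤ 1 for 1 ≤ x < floor(n/2), so b''_x(n) is monotonically decreasing in x and b''_1(n) is the largest value. -/
/-!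
From `(2m)! = 2m (2m-1) (2m-2)!` the normalisation `X m · 2^(m-1) (m-1)! = (2m-2)!` yields the
double-factorial recurrence `X (m+1) = (2m-1) X m`. Moving one label across the cherry therefore
multiplies `X x · X (n-x)` by `2x-1` and divides it by `2n-2x-3`, which is at least `2x-1` while
`x + 1 ≤ n / 2`; so the products decrease along `1, …, n / 2`.
-/

theorem succ_eq_mul_of_mul_pow_mul_factorial_eq (X : ℕ → ℕ)
    (hX : ∀ m : ℕ, 1 ≤ m →
      X m * 2 ^ (m - 1) * Nat.factorial (m - 1) = Nat.factorial (2 * m - 2))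
    {m : ℕ} (hm : 1 ≤ m) : X (m + 1) = (2 * m - 1) * X m := by
  obtain ⟨k, rfl⟩ : ∃ k, m = k + 1 := ⟨m - 1, by omega⟩
  have hk := hX (k + 1) hm
  have hk₁ := hX (k + 2) (by omega)
  simp only [show k + 1 - 1 = k by omega, show 2 * (k + 1) - 2 = 2 * k by omega] at hk
  simp only [show k + 2 - 1 = k + 1 by omega, show 2 * (k + 2) - 2 = 2 * k + 1 + 1 by omega,
    Nat.factorial_succ, pow_succ, ← hk] at hk₁
  rw [show 2 * (k + 1) - 1 = 2 * k + 1 by omega]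
  have hpos : 0 < 2 * (k + 1) * (2 ^ k * k.factorial) := by positivity
  exact Nat.eq_of_mul_eq_mul_right hpos (by linarith)

section CherryProduct

variable {X : ℕ → ℕ} (hrec : ∀ m : ℕ, 1 ≤ m → X (m + 1) = (2 * m - 1) * X m)
include hrec

theorem mul_sub_succ_mul_eq {n x : ℕ} (hx : 1 ≤ x) (hxn : x + 2 ≤ n) :
    X (x + 1) * X (n - (x + 1)) * (2 * n - 2 * x - 3) = X x * X (n - x) * (2 * x - 1) := by
  have hright : X (n - x) = (2 * n - 2 * x - 3) * X (n - (x + 1)) := by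
    rw [show n - x = n - (x + 1) + 1 by omega, hrec _ (by omega),
      show 2 * (n - (x + 1)) - 1 = 2 * n - 2 * x - 3 by omega]
  rw [hrec x hx, hright]
  ring

theorem mul_sub_succ_le {n x : ℕ} (hx : 1 ≤ x) (hxn : x + 1 ≤ n / 2) :
    X (x + 1) * X (n - (x + 1)) ≤ X x * X (n - x) := by
  have hratio : 2 * x - 1 ≤ 2 * n - 2 * x - 3 := by omega
  refine Nat.le_of_mul_le_mul_right ?_ (show 0 < 2 * n - 2 * x - 3 by omega)
  rw [mul_sub_succ_mul_eq hrec hx (by omega)]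
  exact Nat.mul_le_mul_left _ hratio

theorem mul_sub_le_of_le {n x y : ℕ} (hx : 1 ≤ x) (hxy : x ≤ y) (hy : y ≤ n / 2) :
    X y * X (n - y) ≤ X x * X (n - x) := by
  induction y, hxy using Nat.le_induction with
  | base => rfl
  | succ y hxy ih =>
    exact (mul_sub_succ_le hrec (hx.trans hxy) hy).trans (ih (by omega))

end CherryProduct

theorem unrankedLabeled_cherry_monotone_general (n : ℕ) (X : ℕ → ℕ)
    (hX : ∀ m : ℕ, 1 ≤ m →
      X m * 2 ^ (m - 1) * Nat.factorial (m - 1) = Nat.factorial (2 * m - 2)) :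
    (∀ x : ℕ, 1 ≤ x → x + 1 ≤ n / 2 →
      X (x + 1) * X (n - (x + 1)) * (2 * n - 2 * x - 3) =
        X x * X (n - x) * (2 * x - 1) ∧
      2 * x - 1 ≤ 2 * n - 2 * x - 3 ∧
      X (x + 1) * X (n - (x + 1)) ≤ X x * X (n - x)) ∧
    (∀ x y : ℕ, 1 ≤ x → x ≤ y → y ≤ n / 2 →
      X y * X (n - y) ≤ X x * X (n - x)) ∧
    (∀ x : ℕ, 1 ≤ x → x ≤ n / 2 → X x * X (n - x) ≤ X 1 * X (n - 1)) := by
  have hrec : ∀ m : ℕ, 1 ≤ m → X (m + 1) = (2 * m - 1) * X m :=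
    fun _ hm => succ_eq_mul_of_mul_pow_mul_factorial_eq X hX hm
  refine ⟨fun x hx hxn => ⟨mul_sub_succ_mul_eq hrec hx (by omega), by omega,
    mul_sub_succ_le hrec hx hxn⟩, fun x y hx hxy hy => mul_sub_le_of_le hrec hx hxy hy,
    fun x hx hxn => mul_sub_le_of_le hrec le_rfl hx hxn⟩

/-- Proposition 9: fix `n ≥ 2` and let `b''_x(n) = X_x X_{n-x}` with
`X_m = (2m-2)!/(2^{m-1}(m-1)!)`. Then for `1 ≤ x < ⌊n/2⌋` the ratio
`b''_{x+1}(n)/b''_x(n)` equals `(2x-1)/(2n-2x-3) ≤ 1`, so `b''_x(n)` is monotonically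
decreasing in `x` on `1 ≤ x ≤ ⌊n/2⌋` and `b''_1(n)` is the largest value. -/
theorem unrankedLabeled_cherry_monotone (n : ℕ) (hn : 2 ≤ n) (X : ℕ → ℕ)
    (hX : ∀ m : ℕ, 1 ≤ m →
      X m * 2 ^ (m - 1) * Nat.factorial (m - 1) = Nat.factorial (2 * m - 2)) :
    (∀ x : ℕ, 1 ≤ x → x + 1 ≤ n / 2 →
      X (x + 1) * X (n - (x + 1)) * (2 * n - 2 * x - 3) =
        X x * X (n - x) * (2 * x - 1) ∧
      2 * x - 1 ≤ 2 * n - 2 * x - 3 ∧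
      X (x + 1) * X (n - (x + 1)) ≤ X x * X (n - x)) ∧
    (∀ x y : ℕ, 1 ≤ x → x ≤ y → y ≤ n / 2 →
      X y * X (n - y) ≤ X x * X (n - x)) ∧
    (∀ x : ℕ, 1 ≤ x → x ≤ n / 2 → X x * X (n - x) ≤ X 1 * X (n - 1)) :=
  unrankedLabeled_cherry_monotone_general n X hX
end

section
/- Define c_x = sum_{k≥0} (−1)^k/(2k+1)^{x+1} for even x ≥ 0, and c_x = (1 − 2^{−(x+1)})·ζ(x+1) for odd x ≥ 1. Then c_1 = π²/8, c_x ≤ 1 for all even x, c_x < ζ(3) < c_1 for all odd x ≥ 3, and hence c_1 strictly exceeds c_x for every x ≠ 1. -/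
/-!
For even `x` the series is alternating with decreasing terms, so it is bounded by its first
term `1`. For odd `x ≥ 3`, `c_x < ζ(x+1) ≤ ζ(3)`, and `ζ(3) < 1.21 < π²/8 = c_1`: the bound on
`ζ(3)` takes four terms exactly and controls the tail by telescoping,
`1/n³ ≤ 1/((n-1)n(n+1)) = g(n-1) - g(n)` with `g(n) = 1/(2n(n+1))`.
-/

open Finset Real

/-- The real Riemann zeta value `ζ(s) = ∑_{k ≥ 1} k^{-s}` for natural `s`. -/
noncomputable def zetaR (s : ℕ) : ℝ := ∑' k : ℕ, 1 / ((k : ℝ) + 1) ^ s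

/-- `c_x = ∑_{k ≥ 0} (-1)^k/(2k+1)^{x+1}` for even `x`, and
`c_x = (1 - 2^{-(x+1)}) ζ(x+1)` for odd `x`. -/
noncomputable def cseq (x : ℕ) : ℝ :=
  if Even x then ∑' k : ℕ, (-1 : ℝ) ^ k / (2 * (k : ℝ) + 1) ^ (x + 1)
  else (1 - (2 : ℝ) ^ (-((x : ℤ) + 1))) * zetaR (x + 1)

/-- `0 ≤ f 0` covers the non-summable case, where the `tsum` is `0`. -/
theorem Antitone.tsum_alternating_le {f : ℕ → ℝ} (hf : Antitone f) (h0 : 0 ≤ f 0) :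
    ∑' i, (-1) ^ i * f i ≤ f 0 := by
  by_cases h : Summable fun i => (-1) ^ i * f i
  · simpa using hf.tendsto_le_alternating_series h.hasSum.tendsto_sum_nat 0
  · rwa [tsum_eq_zero_of_not_summable h]

theorem summable_one_div_nat_succ_pow {s : ℕ} (hs : 1 < s) :
    Summable fun k : ℕ => 1 / ((k : ℝ) + 1) ^ s := by
  simpa using (summable_nat_add_iff 1).2 (Real.summable_one_div_nat_pow.2 hs)

theorem zetaR_two : zetaR 2 = π ^ 2 / 6 := by
  simpa [zetaR] using ((hasSum_nat_add_iff' 1).2 hasSum_zeta_two).tsum_eq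

theorem one_le_zetaR {s : ℕ} (hs : 1 < s) : 1 ≤ zetaR s := by
  simpa [zetaR] using (summable_one_div_nat_succ_pow hs).le_tsum 0 fun k _ => by positivity

theorem zetaR_le_zetaR_of_le {s t : ℕ} (hs : 1 < s) (hst : s ≤ t) : zetaR t ≤ zetaR s := by
  refine (summable_one_div_nat_succ_pow (hs.trans_le hst)).tsum_le_tsum (fun k => ?_)
    (summable_one_div_nat_succ_pow hs)
  gcongr
  linarith [k.cast_nonneg (α := ℝ)]

theorem one_div_succ_pow_three_le_sub {n : ℝ} (hn : 0 < n) :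
    1 / (n + 1) ^ 3 ≤ 1 / (2 * n * (n + 1)) - 1 / (2 * (n + 1) * (n + 2)) := by
  have h : 1 / (2 * n * (n + 1)) - 1 / (2 * (n + 1) * (n + 2)) = 1 / (n * (n + 1) * (n + 2)) := by
    field_simp; ring
  rw [h, div_le_div_iff₀ (by positivity) (by positivity)]
  nlinarith

theorem tsum_one_div_add_succ_pow_three_le {m : ℕ} (hm : 0 < m) :
    ∑' k : ℕ, 1 / ((k : ℝ) + m + 1) ^ 3 ≤ 1 / (2 * (m : ℝ) * (m + 1)) := by
  set g : ℕ → ℝ := fun k => 1 / (2 * ((k : ℝ) + m) * ((k : ℝ) + m + 1))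
  refine Real.tsum_le_of_sum_range_le (fun _ => by positivity) fun n => ?_
  calc ∑ k ∈ range n, 1 / ((k : ℝ) + m + 1) ^ 3
      ≤ ∑ k ∈ range n, (g k - g (k + 1)) := sum_le_sum fun k _ => by
        simp only [g]; push_cast
        exact (one_div_succ_pow_three_le_sub (by positivity)).trans_eq (by ring)
    _ = g 0 - g n := sum_range_sub' g n
    _ ≤ g 0 := sub_le_self _ (by positivity)
    _ = 1 / (2 * m * (m + 1)) := by simp [g]

theorem zetaR_three_lt : zetaR 3 < 1.21 := by
  have tail := tsum_one_div_add_succ_pow_three_le (m := 4) (by norm_num)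
  rw [zetaR, ← (summable_one_div_nat_succ_pow (s := 3) (by norm_num)).sum_add_tsum_nat_add 4]
  norm_num [sum_range_succ] at tail ⊢
  linarith

theorem cseq_one : cseq 1 = π ^ 2 / 8 := by
  rw [cseq, if_neg (by decide), zetaR_two]
  norm_num
  ring

theorem zetaR_three_lt_cseq_one : zetaR 3 < cseq 1 := by
  rw [cseq_one]
  nlinarith [zetaR_three_lt, pi_gt_d2]

theorem cseq_le_one_of_even {x : ℕ} (hx : Even x) : cseq x ≤ 1 := by
  have hf : Antitone fun k : ℕ => 1 / (2 * (k : ℝ) + 1) ^ (x + 1) := by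
    refine antitone_nat_of_succ_le fun k => ?_
    gcongr
    linarith
  rw [cseq, if_pos hx]
  simp_rw [div_eq_mul_one_div ((-1 : ℝ) ^ _)]
  simpa using hf.tsum_alternating_le (by positivity)

theorem cseq_lt_zetaR_three_of_odd {x : ℕ} (hx : Odd x) (hx3 : 3 ≤ x) : cseq x < zetaR 3 := by
  rw [cseq, if_neg (Nat.not_even_iff_odd.2 hx)]
  have hpos : 0 < zetaR (x + 1) := zero_lt_one.trans_le (one_le_zetaR (by omega))
  calc (1 - (2 : ℝ) ^ (-((x : ℤ) + 1))) * zetaR (x + 1)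
      < zetaR (x + 1) := mul_lt_of_lt_one_left hpos (sub_lt_self _ (zpow_pos two_pos _))
    _ ≤ zetaR 3 := zetaR_le_zetaR_of_le (by norm_num) (by omega)

/-- `c_1 = π²/8`; `c_x ≤ 1` for all even `x`; `c_x < ζ(3) < c_1` for all odd `x ≥ 3`;
hence `c_1` strictly exceeds `c_x` for every `x ≠ 1`. -/
theorem cseq_max_at_one :
    cseq 1 = Real.pi ^ 2 / 8 ∧
    (∀ x : ℕ, Even x → cseq x ≤ 1) ∧
    (∀ x : ℕ, Odd x → 3 ≤ x → cseq x < zetaR 3 ∧ zetaR 3 < cseq 1) ∧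
    (∀ x : ℕ, x ≠ 1 → cseq x < cseq 1) := by
  refine ⟨cseq_one, fun x => cseq_le_one_of_even,
    fun x hx hx3 => ⟨cseq_lt_zetaR_three_of_odd hx hx3, zetaR_three_lt_cseq_one⟩, fun x hx1 => ?_⟩
  have one_lt_cseq_one : 1 < cseq 1 := (one_le_zetaR (by norm_num)).trans_lt zetaR_three_lt_cseq_one
  rcases Nat.even_or_odd x with hx | hx
  · exact (cseq_le_one_of_even hx).trans_lt one_lt_cseq_one
  · have hx3 : 3 ≤ x := by obtain ⟨m, rfl⟩ := hx; omega
    exact (cseq_lt_zetaR_three_of_odd hx hx3).trans zetaR_three_lt_cseq_one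
end
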